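/- In the unweighted graph G' of the W[1]-hardness construction, if a strategy profile s* of the (k+3)-player competitive diffusion game is a standard Nash equilibrium — meaning k players choose k distinct vertices v_1,…,v_k of V ⊆ V(G'), one player chooses b, and two players choose a_2 and a_3 — then {v_1,…,v_k} is an independent set of the original graph G. -/

import Mathlib

open Classical

noncomputable section

/-- State labels in the competitive diffusion game:
`none` = free (undominated, non-neutral), `some none` = neutral,
`some (some i)` = dominated by player `i`. -/
def initLabel {V : Type*} {k : ℕ} (s : Fin k → V) (v : V) : Option (Option (Fin k)) :=
  if h : ∃! i, s i = v then some (some h.choose)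
  else if _h : (∃ i, s i = v) then some none
  else none

/-- One diffusion step: a free vertex adjacent to vertices dominated by exactly one
player becomes dominated by that player; if adjacent to vertices dominated by two or
more players it becomes neutral. -/
def stepLabel {V : Type*} {k : ℕ} (G : SimpleGraph V) (L : V → Option (Option (Fin k)))
    (v : V) : Option (Option (Fin k)) :=
  match L v with
  | some x => some x
  | none =>
    if h : ∃! i : Fin k, ∃ u, G.Adj u v ∧ L u = some (some i) then some (some h.choose)
    else if _h : (∃ i : Fin k, ∃ u, G.Adj u v ∧ L u = some (some i)) then some none
    else none

/-- The final state of the diffusion process (it stabilizes after `|V|` steps). -/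
def finalLabel {V : Type*} [Fintype V] {k : ℕ} (G : SimpleGraph V) (s : Fin k → V) :
    V → Option (Option (Fin k)) :=
  (fun L v => stepLabel G L v)^[Fintype.card V] (initLabel s)

/-- The utility of player `i`: total weight of the vertices `i` dominates at the end. -/
def utility {V : Type*} [Fintype V] {k : ℕ} (G : SimpleGraph V) (w : V → ℤ)
    (s : Fin k → V) (i : Fin k) : ℤ :=
  ∑ v ∈ Finset.univ.filter (fun v => finalLabel G s v = some (some i)), w v

/-- `s` is a pure Nash equilibrium of the competitive diffusion game `(k, G, w)`. -/
def isNash {V : Type*} [Fintype V] [DecidableEq V] {k : ℕ} (G : SimpleGraph V) (w : V → ℤ)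
    (s : Fin k → V) : Prop :=
  ∀ (i : Fin k) (v' : V), utility G w (Function.update s i v') i ≤ utility G w s i

/-- `G` with weights `w` admits `κ` players with boundary `t`: some pure Nash
equilibrium `s` of `(κ, G, w)` satisfies `ν(s) ≤ t ≤ μ(s)`. -/
def admitsWith {V : Type*} [Fintype V] [DecidableEq V] (G : SimpleGraph V) (w : V → ℤ)
    (κ : ℕ) (t : ℤ) : Prop :=
  ∃ s : Fin κ → V, isNash G w s ∧
    (∀ v : V, utility G w (Fin.snoc s v) (Fin.last κ) ≤ t) ∧
    (∀ i : Fin κ, t ≤ utility G w s i)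

/-- The path on `n` vertices. -/
def pathGraph (n : ℕ) : SimpleGraph (Fin n) :=
  SimpleGraph.fromRel (fun i j => (i : ℕ) + 1 = (j : ℕ))

/-- The unweighted path on `n` vertices admits `κ` players with boundary `t`. -/
def pathAdmits (n κ t : ℕ) : Prop :=
  admitsWith (pathGraph n) (fun _ => (1 : ℤ)) κ (t : ℤ)

/-- Vertices of the unweighted graph `G'` built from `G` on `Fin n`:
component `A` = the 4-path plus `n` pendant leaves on `a_1` and `n` on `a_4`;
component `B` = the original vertices, one subdivision vertex per edge of `G`,
`n − deg(v)` pendant leaves on each vertex `v`, the vertex `b`, and `n³` pendant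
leaves on `b`. -/
abbrev VGp (n : ℕ) (G : SimpleGraph (Fin n)) [DecidableRel G.Adj] :=
  (Fin 4 ⊕ (Fin n ⊕ Fin n)) ⊕
    (Fin n ⊕ (G.edgeSet ⊕ ((Σ v : Fin n, Fin (n - G.degree v)) ⊕ (Unit ⊕ Fin (n ^ 3)))))

/-- Generating relation for `G'`. -/
def relGp (n : ℕ) (G : SimpleGraph (Fin n)) [DecidableRel G.Adj] :
    VGp n G → VGp n G → Prop := fun x y =>
  match x, y with
  -- the path a₁a₂a₃a₄:
  | Sum.inl (Sum.inl i), Sum.inl (Sum.inl i') => (i : ℕ) + 1 = (i' : ℕ)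
  -- n pendant leaves on a₁:
  | Sum.inl (Sum.inl i), Sum.inl (Sum.inr (Sum.inl _)) => (i : ℕ) = 0
  -- n pendant leaves on a₄:
  | Sum.inl (Sum.inl i), Sum.inl (Sum.inr (Sum.inr _)) => (i : ℕ) = 3
  -- each edge e of G is subdivided by the vertex b_e:
  | Sum.inr (Sum.inl v), Sum.inr (Sum.inr (Sum.inl e)) => v ∈ (e : Sym2 (Fin n))
  -- n − deg(v) pendant leaves on each v ∈ V:
  | Sum.inr (Sum.inl v), Sum.inr (Sum.inr (Sum.inr (Sum.inl ⟨v', _⟩))) => v = v'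
  -- b is adjacent to every v ∈ V:
  | Sum.inr (Sum.inl _), Sum.inr (Sum.inr (Sum.inr (Sum.inr (Sum.inl _)))) => True
  -- n³ pendant leaves on b:
  | Sum.inr (Sum.inr (Sum.inr (Sum.inr (Sum.inl _)))),
      Sum.inr (Sum.inr (Sum.inr (Sum.inr (Sum.inr _)))) => True
  | _, _ => False

/-- The unweighted graph `G'` of the W[1]-hardness construction. -/
def Gp (n : ℕ) (G : SimpleGraph (Fin n)) [DecidableRel G.Adj] : SimpleGraph (VGp n G) :=
  SimpleGraph.fromRel (relGp n G)

/-- The standard profile on `G'`: the first `k` players on the original vertices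
`f 0, …, f (k−1)`, one player on `b`, and two players on `a_2` and `a_3`. -/
def profGp (n : ℕ) (G : SimpleGraph (Fin n)) [DecidableRel G.Adj] (k : ℕ)
    (f : Fin k → Fin n) : Fin (k + 3) → VGp n G := fun i =>
  if h : (i : ℕ) < k then Sum.inr (Sum.inl (f ⟨i, h⟩))
  else if (i : ℕ) = k then Sum.inr (Sum.inr (Sum.inr (Sum.inr (Sum.inl ()))))
  else if (i : ℕ) = k + 1 then Sum.inl (Sum.inl (1 : Fin 4))
  else Sum.inl (Sum.inl (2 : Fin 4))
/-! Suppose `v i` and `v j` are adjacent in `G`. Both players reach the subdivision vertex of the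
edge `v i v j` at time 1, so it becomes neutral, and every free vertex of `V` is reached at time 1
by the player on `b` as well. Hence the player on `v i` ends up with at most `v i`, the
subdivision vertices of its other `deg (v i) - 1` edges and its `n - deg (v i)` leaves, i.e. at
most `n` vertices. By moving to `a₁` it would capture `a₁` and its `n` leaves instead,
contradicting the equilibrium. -/

open Finset

section Diffusion
variable {V : Type*} {k : ℕ}

lemma eq_of_initLabel_eq_some {s : Fin k → V} {x : V} {p : Fin k}
    (h : initLabel s x = some (some p)) : s p = x := by
  unfold initLabel at h
  split_ifs at h with hu <;> cases h
  exact hu.choose_spec.1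

lemma initLabel_eq_of_forall_eq_iff {s : Fin k → V} {x : V} {p : Fin k}
    (h : ∀ j, s j = x ↔ j = p) : initLabel s x = some (some p) := by
  have hu : ∃! j, s j = x := ⟨p, (h p).2 rfl, fun j hj => (h j).1 hj⟩
  rw [initLabel, dif_pos hu, (h _).1 hu.choose_spec.1]

lemma initLabel_eq_none_of_forall_ne {s : Fin k → V} {x : V} (h : ∀ j, s j ≠ x) :
    initLabel s x = none := by
  rw [initLabel, dif_neg (fun ⟨j, hj, _⟩ => h j hj), dif_neg (fun ⟨j, hj⟩ => h j hj)]

variable {G : SimpleGraph V} {L : V → Option (Option (Fin k))} {x : V}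

lemma stepLabel_eq_of_eq_some {y : Option (Fin k)} (h : L x = some y) :
    stepLabel G L x = some y := by
  rw [stepLabel, h]

lemma iterate_stepLabel_eq_of_eq_some {y : Option (Fin k)} (h : L x = some y) (t : ℕ) :
    (stepLabel G)^[t] L x = some y := by
  induction t with
  | zero => exact h
  | succ t ih => rw [Function.iterate_succ_apply']; exact stepLabel_eq_of_eq_some ih

lemma stepLabel_eq_of_unique {u : V} {p : Fin k} (hx : L x = none) (hu : G.Adj u x)
    (hp : L u = some (some p)) (huniq : ∀ u q, G.Adj u x → L u = some (some q) → q = p) :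
    stepLabel G L x = some (some p) := by
  have h : ∃! q : Fin k, ∃ u, G.Adj u x ∧ L u = some (some q) :=
    ⟨p, ⟨u, hu, hp⟩, fun q ⟨u, hu, hq⟩ => huniq u q hu hq⟩
  obtain ⟨u', hu', hq⟩ := h.choose_spec.1
  rw [stepLabel, hx]
  simp only [dif_pos h, huniq u' _ hu' hq]

lemma eq_of_stepLabel_eq {p : Fin k} (h : stepLabel G L x = some (some p)) :
    L x = some (some p) ∨ L x = none ∧ (∃ u, G.Adj u x ∧ L u = some (some p)) ∧
      ∀ u q, G.Adj u x → L u = some (some q) → q = p := by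
  unfold stepLabel at h
  rcases hx : L x with _ | y
  · rw [hx] at h
    simp only at h
    split_ifs at h with hu <;> cases h
    obtain ⟨⟨u, hu', hp⟩, huniq⟩ := hu.choose_spec
    exact Or.inr ⟨rfl, ⟨u, hu', hp⟩, fun u q hu hq => huniq q ⟨u, hu, hq⟩⟩
  · rw [hx] at h
    exact Or.inl h

variable [Fintype V] {s : Fin k → V} {p : Fin k}

lemma finalLabel_eq_iterate :
    finalLabel G s = (stepLabel G)^[Fintype.card V] (initLabel s) := rfl

lemma finalLabel_eq_of_forall_eq_iff (hx : ∀ j, s j = x ↔ j = p) :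
    finalLabel G s x = some (some p) := by
  rw [finalLabel_eq_iterate]
  exact iterate_stepLabel_eq_of_eq_some (initLabel_eq_of_forall_eq_iff hx) _

theorem finalLabel_eq_of_pendant {ℓ : V} (hx : ∀ j, s j = x ↔ j = p) (hℓ : ∀ j, s j ≠ ℓ)
    (hnbr : ∀ u, G.Adj u ℓ ↔ u = x) : finalLabel G s ℓ = some (some p) := by
  obtain ⟨c, hc⟩ := Nat.exists_eq_add_one.2 (Fintype.card_pos_iff.2 ⟨ℓ⟩)
  have hstep : stepLabel G (initLabel s) ℓ = some (some p) := by
    refine stepLabel_eq_of_unique (initLabel_eq_none_of_forall_ne hℓ) ((hnbr x).2 rfl)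
      (initLabel_eq_of_forall_eq_iff hx) fun u q hu hq => ?_
    rw [(hnbr u).1 hu, initLabel_eq_of_forall_eq_iff hx] at hq
    exact (Option.some_injective _ (Option.some_injective _ hq)).symm
  rw [finalLabel_eq_iterate, hc, Function.iterate_succ_apply]
  exact iterate_stepLabel_eq_of_eq_some hstep c

/-- A free vertex next to `S` can only be captured from `S` while it is still free, and a
neighbour held by a rival since time 0 then makes it neutral instead. -/
theorem mem_of_finalLabel_eq {S : Set V} (hp : s p ∈ S)
    (hfront : ∀ x ∉ S, ∀ u ∈ S, G.Adj u x → initLabel s x ≠ none ∨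
      ∃ u q, G.Adj u x ∧ q ≠ p ∧ initLabel s u = some (some q))
    (hx : finalLabel G s x = some (some p)) : x ∈ S := by
  suffices h : ∀ t x, (stepLabel G)^[t] (initLabel s) x = some (some p) → x ∈ S from h _ x hx
  intro t
  induction t with
  | zero => intro x hx; exact eq_of_initLabel_eq_some hx ▸ hp
  | succ t ih =>
    intro x hx
    rw [Function.iterate_succ_apply'] at hx
    obtain hx | ⟨hfree, ⟨u, hu, hup⟩, huniq⟩ := eq_of_stepLabel_eq hx
    · exact ih x hx
    by_contra hxS
    obtain hinit | ⟨u', q, hu', hqp, hq⟩ := hfront x hxS u (ih u hup) hu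
    · obtain ⟨y, hy⟩ := Option.ne_none_iff_exists'.1 hinit
      rw [iterate_stepLabel_eq_of_eq_some hy] at hfree
      cases hfree
    · exact hqp (huniq u' q hu' (iterate_stepLabel_eq_of_eq_some hq t))

lemma utility_one_eq_card (i : Fin k) :
    utility G (fun _ => 1) s i = #{x | finalLabel G s x = some (some i)} := by
  simp [utility]

end Diffusion

section Gp
variable {n k : ℕ} {G : SimpleGraph (Fin n)} [DecidableRel G.Adj] {v : Fin k → Fin n}

lemma Gp_not_adj_inr_inl (y z) : ¬ (Gp n G).Adj (Sum.inr y) (Sum.inl z) := by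
  simp [Gp, relGp]

lemma Gp_adj_a₁Leaf_iff (t : Fin n) (u : VGp n G) :
    (Gp n G).Adj u (Sum.inl (Sum.inr (Sum.inl t))) ↔ u = Sum.inl (Sum.inl 0) := by
  rcases u with ((i | t | t) | (w | e | ⟨w, t⟩ | ⟨⟩ | t)) <;> simp [Gp, relGp]

lemma Gp_adj_subdiv_iff (e : G.edgeSet) (u : VGp n G) :
    (Gp n G).Adj u (Sum.inr (Sum.inr (Sum.inl e))) ↔
      ∃ w ∈ (e : Sym2 (Fin n)), u = Sum.inr (Sum.inl w) := by
  rcases u with ((i | t | t) | (w | e | ⟨w, t⟩ | ⟨⟩ | t)) <;> simp [Gp, relGp]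

lemma Gp_adj_vertexLeaf_iff (w : Fin n) (t : Fin (n - G.degree w)) (u : VGp n G) :
    (Gp n G).Adj u (Sum.inr (Sum.inr (Sum.inr (Sum.inl ⟨w, t⟩)))) ↔ u = Sum.inr (Sum.inl w) := by
  rcases u with ((i | t | t) | (w | e | ⟨w, t⟩ | ⟨⟩ | t)) <;> simp [Gp, relGp]

lemma Gp_adj_bLeaf_iff (t : Fin (n ^ 3)) (u : VGp n G) :
    (Gp n G).Adj u (Sum.inr (Sum.inr (Sum.inr (Sum.inr (Sum.inr t))))) ↔
      u = Sum.inr (Sum.inr (Sum.inr (Sum.inr (Sum.inl ())))) := by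
  rcases u with ((i | t | t) | (w | e | ⟨w, t⟩ | ⟨⟩ | t)) <;> simp [Gp, relGp]

lemma Gp_adj_b_vertex (w : Fin n) :
    (Gp n G).Adj (Sum.inr (Sum.inr (Sum.inr (Sum.inr (Sum.inl ()))))) (Sum.inr (Sum.inl w)) := by
  simp [Gp, relGp]

lemma Gp_adj_vertex_subdiv {w : Fin n} {e : G.edgeSet} (hw : w ∈ (e : Sym2 (Fin n))) :
    (Gp n G).Adj (Sum.inr (Sum.inl w)) (Sum.inr (Sum.inr (Sum.inl e))) := by
  simp [Gp, relGp, hw]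

/-- What the player on `a` can capture once the subdivision vertex of `e₀` is neutral. -/
def regionGp (a : Fin n) (e₀ : Sym2 (Fin n)) : Finset (VGp n G) :=
  insert (Sum.inr (Sum.inl a))
    (({e : G.edgeSet | a ∈ (e : Sym2 (Fin n)) ∧ (e : Sym2 (Fin n)) ≠ e₀} : Finset _).image
        (fun e => Sum.inr (Sum.inr (Sum.inl e))) ∪
      univ.image fun t => Sum.inr (Sum.inr (Sum.inr (Sum.inl ⟨a, t⟩))))

lemma card_regionGp_le {a b : Fin n} (hab : G.Adj a b) :
    #(regionGp (G := G) a s(a, b)) ≤ n := by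
  set E : Finset G.edgeSet := {e | a ∈ (e : Sym2 (Fin n)) ∧ (e : Sym2 (Fin n)) ≠ s(a, b)}
  have hE : #E ≤ G.degree a - 1 := by
    rw [← G.card_incidenceFinset_eq_degree,
      ← card_erase_of_mem ((G.mem_incidenceFinset _ _).2 (G.mk'_mem_incidenceSet_left_iff.2 hab))]
    refine card_le_card_of_injOn Subtype.val (fun e he => ?_) Subtype.val_injective.injOn
    simp only [E, coe_filter, mem_univ, true_and, Set.mem_ofPred_eq] at he
    simp [he.2, SimpleGraph.incidenceSet, he.1]
  have hpos : 0 < G.degree a := G.degree_pos_iff_exists_adj a |>.2 ⟨b, hab⟩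
  have hlt : G.degree a < n := by simpa using G.degree_lt_card_verts a
  calc #(regionGp (G := G) a s(a, b))
      ≤ #(E.image fun e => Sum.inr (Sum.inr (Sum.inl e))) +
        #(univ.image fun t => (Sum.inr (Sum.inr (Sum.inr (Sum.inl ⟨a, t⟩))) : VGp n G)) + 1 :=
        (card_insert_le _ _).trans (Nat.add_le_add_right (card_union_le _ _) 1)
    _ ≤ #E + (n - G.degree a) + 1 := by
        gcongr
        · exact card_image_le
        · exact card_image_le.trans (by simp)
    _ ≤ n := by omega

lemma profGp_castAdd (i : Fin k) :
    profGp n G k v (Fin.castAdd 3 i) = Sum.inr (Sum.inl (v i)) := by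
  simp [profGp]

lemma profGp_eq_b_iff (j : Fin (k + 3)) :
    profGp n G k v j = Sum.inr (Sum.inr (Sum.inr (Sum.inr (Sum.inl ())))) ↔
      j = ⟨k, by omega⟩ := by
  unfold profGp
  split_ifs <;> simp [Fin.ext_iff] <;> omega

lemma profGp_eq_vertex_iff (hv : Function.Injective v) (i : Fin k) (j : Fin (k + 3)) :
    profGp n G k v j = Sum.inr (Sum.inl (v i)) ↔ j = Fin.castAdd 3 i := by
  unfold profGp
  split_ifs <;> simp [hv.eq_iff, Fin.ext_iff] <;> omega

lemma profGp_ne_a₁ (j : Fin (k + 3)) : profGp n G k v j ≠ Sum.inl (Sum.inl 0) := by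
  unfold profGp
  split_ifs <;> simp

lemma profGp_ne_inl_inr (j : Fin (k + 3)) (t : Fin n ⊕ Fin n) :
    profGp n G k v j ≠ Sum.inl (Sum.inr t) := by
  unfold profGp
  split_ifs <;> simp

lemma initLabel_profGp_b :
    initLabel (profGp n G k v) (Sum.inr (Sum.inr (Sum.inr (Sum.inr (Sum.inl ()))))) =
      some (some ⟨k, by omega⟩) :=
  initLabel_eq_of_forall_eq_iff profGp_eq_b_iff

lemma regionGp_frontier (hv : Function.Injective v) {i j : Fin k} (hij : i ≠ j) :
    ∀ x ∉ (regionGp (G := G) (v i) s(v i, v j) : Set (VGp n G)),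
      ∀ u ∈ (regionGp (G := G) (v i) s(v i, v j) : Set (VGp n G)), (Gp n G).Adj u x →
      initLabel (profGp n G k v) x ≠ none ∨ ∃ u q, (Gp n G).Adj u x ∧ q ≠ Fin.castAdd 3 i ∧
        initLabel (profGp n G k v) u = some (some q) := by
  intro x hx u hu hux
  rcases x with (z | w | e | ⟨w, t⟩ | ⟨⟩ | t)
  · rcases u with _ | y
    · simp [regionGp] at hu
    · exact absurd hux (Gp_not_adj_inr_inl y z)
  · have := i.isLt
    exact Or.inr ⟨_, _, Gp_adj_b_vertex w, by simp [Fin.ext_iff]; omega, initLabel_profGp_b⟩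
  · obtain ⟨w, hw, rfl⟩ := (Gp_adj_subdiv_iff e u).1 hux
    simp [regionGp] at hu hx
    subst hu
    have he := hx hw
    refine Or.inr ⟨_, _, Gp_adj_vertex_subdiv (w := v j) (by simp [he]),
      fun h => hij (Fin.castAdd_injective _ _ h).symm,
      initLabel_eq_of_forall_eq_iff (profGp_eq_vertex_iff hv j)⟩
  · rw [Gp_adj_vertexLeaf_iff] at hux
    subst hux
    simp [regionGp] at hu
    subst hu
    simp [regionGp] at hx
  · left
    rw [initLabel_profGp_b]
    simp
  · rw [Gp_adj_bLeaf_iff] at hux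
    subst hux
    simp [regionGp] at hu

theorem utility_profGp_le (hv : Function.Injective v) {i j : Fin k} (hij : i ≠ j)
    (hadj : G.Adj (v i) (v j)) :
    utility (Gp n G) (fun _ => 1) (profGp n G k v) (Fin.castAdd 3 i) ≤ n := by
  have hp : profGp n G k v (Fin.castAdd 3 i) ∈
      ((regionGp (G := G) (v i) s(v i, v j) : Finset (VGp n G)) : Set (VGp n G)) := by
    rw [profGp_castAdd]
    exact mem_insert_self _ _
  have hsub : ({x | finalLabel (Gp n G) (profGp n G k v) x = some (some (Fin.castAdd 3 i))} :
      Finset (VGp n G)) ⊆ regionGp (v i) s(v i, v j) := fun x hx =>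
    mem_of_finalLabel_eq hp (regionGp_frontier hv hij) (mem_filter.1 hx).2
  rw [utility_one_eq_card]
  exact_mod_cast (card_le_card hsub).trans (card_regionGp_le hadj)

theorem lt_utility_update_a₁ (i : Fin k) :
    (n : ℤ) < utility (Gp n G) (fun _ => 1)
      (Function.update (profGp n G k v) (Fin.castAdd 3 i) (Sum.inl (Sum.inl 0)))
      (Fin.castAdd 3 i) := by
  set s := Function.update (profGp n G k v) (Fin.castAdd 3 i) (Sum.inl (Sum.inl 0))
  have hs : ∀ j, s j = Sum.inl (Sum.inl 0) ↔ j = Fin.castAdd 3 i := by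
    intro j
    rcases eq_or_ne j (Fin.castAdd 3 i) with rfl | hj
    · simp [s]
    · simp [s, hj, profGp_ne_a₁]
  have hleaf : ∀ t j, s j ≠ Sum.inl (Sum.inr (Sum.inl t)) := by
    intro t j
    rcases eq_or_ne j (Fin.castAdd 3 i) with rfl | hj
    · simp [s]
    · simp [s, hj, profGp_ne_inl_inr]
  have hsub : insert (Sum.inl (Sum.inl 0)) (univ.image fun t => Sum.inl (Sum.inr (Sum.inl t))) ⊆
      ({x | finalLabel (Gp n G) s x = some (some (Fin.castAdd 3 i))} : Finset (VGp n G)) := by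
    intro x hx
    simp only [mem_insert, mem_image, mem_univ, true_and] at hx
    rcases hx with rfl | ⟨t, rfl⟩
    · simp [finalLabel_eq_of_forall_eq_iff hs]
    · simp [finalLabel_eq_of_pendant hs (hleaf t) (Gp_adj_a₁Leaf_iff t)]
  have hcard := card_le_card hsub
  rw [card_insert_of_notMem (by simp),
    card_image_of_injective _ (fun a b h => by simpa using h), card_univ, Fintype.card_fin] at hcard
  rw [utility_one_eq_card]
  exact_mod_cast hcard

end Gp

/-- if a standard strategy profile (k players on distinct original
vertices `v 0, …, v (k−1)`, one player on `b`, two players on `a_2`, `a_3`) is a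
pure Nash equilibrium of the `(k+3)`-player game on `G'`, then
`{v 0, …, v (k−1)}` is an independent set of `G`. -/
theorem Gp_nash_to_independent (n k : ℕ) (G : SimpleGraph (Fin n))
    [DecidableRel G.Adj] (v : Fin k → Fin n) (hv : Function.Injective v)
    (hnash : isNash (Gp n G) (fun _ => (1 : ℤ)) (profGp n G k v)) :
    ∀ i j : Fin k, i ≠ j → ¬ G.Adj (v i) (v j) := by
  intro i j hij hadj
  have hdeviate := hnash (Fin.castAdd 3 i) (Sum.inl (Sum.inl 0))
  linarith [lt_utility_update_a₁ (G := G) (v := v) i, utility_profGp_le hv hij hadj]
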